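/- Let n be finite. Let A, B : ℝ → Matrix (Fin n) (Fin n) ℝ be continuous, Φ the state transition matrix of dξ/dt = A(t)ξ (with ∂Φ(t,s)/∂t = A(t)Φ(t,s), Φ(t,t) = I, Φ(s,t)Φ(t,r) = Φ(s,r), Φ(s,t)⁻¹ = Φ(t,s)), and let P, P̂ be differentiable solutions of dP/dt = AP + PAᵀ + BBᵀ with P(0) = 0 and dP̂/dt = AP̂ + P̂Aᵀ − BBᵀ with P̂(1) = 0; assume P̂(t) invertible for t ∈ [0,1) and P(1) invertible. Fix vectors ξ₀, ξ₁ ∈ ℝⁿ and define L(t) = Φ(t,0)ξ₀ + P(t)Φ(1,t)ᵀ P(1)⁻¹ (ξ₁ − Φ(1,0)ξ₀). Then L satisfies dL/dt = Â(t)L(t) + B(t)B(t)ᵀ P̂(t)⁻¹ Φ(t,1)ξ₁ for t ∈ [0,1), where Â(t) = A(t) − B(t)B(t)ᵀ P̂(t)⁻¹, with boundary values L(0) = ξ₀ and L(1) = ξ₁. -/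

import Mathlib

/-!
`Q = P̂ + P` solves the homogeneous Lyapunov equation `Q̇ = AQ + QAᵀ`, so `P̂(1) = 0` gives
`P̂(t) + P(t) = Φ(t,1) P(1) Φ(t,1)ᵀ`. Hence `P̂ Φ(1,t)ᵀ P(1)⁻¹ = Φ(t,1) − P Φ(1,t)ᵀ P(1)⁻¹`,
and this turns the forcing term `BBᵀ Φ(1,t)ᵀ P(1)⁻¹ (ξ₁ − Φ(1,0)ξ₀)` of `L̇ − AL` into
`BBᵀ P̂⁻¹ (Φ(t,1)ξ₁ − L)`.
-/

open Matrix

-- Any norm would do; the `ℓ∞` operator norm makes square matrices a normed algebra.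
attribute [local instance] Matrix.linftyOpNormedAddCommGroup Matrix.linftyOpNormedSpace
  Matrix.linftyOpNormedRing Matrix.linftyOpNormedAlgebra

section Calculus

variable {𝕜 : Type*} [NontriviallyNormedField 𝕜] [CompleteSpace 𝕜]
  {m n : Type*} [Fintype m] [Fintype n]

theorem Matrix.hasDerivAt_iff {f : 𝕜 → Matrix m n 𝕜} {f' : Matrix m n 𝕜} {t : 𝕜} :
    HasDerivAt f f' t ↔ ∀ i j, HasDerivAt (fun t => f t i j) (f' i j) t := by
  let e : Matrix m n 𝕜 ≃L[𝕜] (m → n → 𝕜) :=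
    (Matrix.ofLinearEquiv 𝕜).symm.toContinuousLinearEquiv
  have he : HasDerivAt f f' t ↔ HasDerivAt (fun t => e (f t)) (e f') t :=
    ⟨fun h => e.hasFDerivAt.comp_hasDerivAt t h,
      fun h => e.symm.hasFDerivAt.comp_hasDerivAt t h⟩
  simp only [he, hasDerivAt_pi]
  rfl

theorem HasDerivAt.matrix_transpose {f : 𝕜 → Matrix m n 𝕜} {f' : Matrix m n 𝕜} {t : 𝕜}
    (h : HasDerivAt f f' t) : HasDerivAt (fun t => (f t)ᵀ) f'ᵀ t :=
  Matrix.hasDerivAt_iff.2 fun i j => Matrix.hasDerivAt_iff.1 h j i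

theorem HasDerivAt.mulVec_const {f : 𝕜 → Matrix m n 𝕜} {f' : Matrix m n 𝕜} {t : 𝕜}
    (h : HasDerivAt f f' t) (v : n → 𝕜) : HasDerivAt (fun t => f t *ᵥ v) (f' *ᵥ v) t :=
  hasDerivAt_pi.2 fun i => HasDerivAt.fun_sum fun j _ =>
    (Matrix.hasDerivAt_iff.1 h i j).mul_const (v j)

end Calculus

theorem HasDerivAt.inverse_of_mul_eq_one {𝕜 R : Type*} [NontriviallyNormedField 𝕜]
    [NormedRing R] [HasSummableGeomSeries R] [NormedAlgebra 𝕜 R]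
    {f g : 𝕜 → R} {f' : R} {t : 𝕜} (hf : HasDerivAt f f' t)
    (hfg : ∀ s, f s * g s = 1) (hgf : ∀ s, g s * f s = 1) :
    HasDerivAt g (-(g t * f' * g t)) t := by
  have hg : ∀ s, Ring.inverse (f s) = g s := fun s =>
    Ring.inverse_unit ⟨f s, g s, hfg s, hgf s⟩
  have := (hasFDerivAt_ringInverse (𝕜 := 𝕜) ⟨f t, g t, hfg t, hgf t⟩).comp_hasDerivAt t hf
  simp only [Function.comp_def, hg] at this
  simpa using this

section Transition

variable {ι : Type*} [Fintype ι] [DecidableEq ι] {A : ℝ → Matrix ι ι ℝ}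
  {Φ : ℝ → ℝ → Matrix ι ι ℝ}

theorem hasDerivAt_transition_right
    (hΦ : ∀ s t, HasDerivAt (fun t => Φ t s) (A t * Φ t s) t)
    (hco : ∀ s t r, Φ s t * Φ t r = Φ s r) (hid : ∀ t, Φ t t = 1) (s t : ℝ) :
    HasDerivAt (Φ s) (-(Φ s t * A t)) t := by
  have hinv : ∀ u v, Φ u v * Φ v u = 1 := fun u v => by rw [hco, hid]
  refine ((hΦ s t).inverse_of_mul_eq_one (hinv · s) (hinv s ·)).congr_deriv ?_
  rw [mul_assoc, mul_assoc, hinv, mul_one]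

theorem eq_transition_conj_of_lyapunov
    (hΦ : ∀ s t, HasDerivAt (fun t => Φ t s) (A t * Φ t s) t)
    (hco : ∀ s t r, Φ s t * Φ t r = Φ s r) (hid : ∀ t, Φ t t = 1) {Q : ℝ → Matrix ι ι ℝ}
    (hQ : ∀ t, HasDerivAt Q (A t * Q t + Q t * (A t)ᵀ) t) (s t : ℝ) :
    Q t = Φ t s * Q s * (Φ t s)ᵀ := by
  have hΨ := hasDerivAt_transition_right hΦ hco hid s
  have hconst : ∀ u, HasDerivAt (fun u => Φ s u * Q u * (Φ s u)ᵀ) 0 u := fun u =>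
    (((hΨ u).mul (hQ u)).mul (hΨ u).matrix_transpose).congr_deriv <| by
      simp only [transpose_neg, transpose_mul, Pi.mul_apply]
      noncomm_ring
  have h := is_const_of_deriv_eq_zero (fun u => (hconst u).differentiableAt)
    (fun u => (hconst u).deriv) t s
  rw [hid, transpose_one, one_mul, mul_one] at h
  have hinv : Φ t s * Φ s t = 1 := by rw [hco, hid]
  calc Q t = (Φ t s * Φ s t) * Q t * (Φ t s * Φ s t)ᵀ := by
        rw [hinv, transpose_one, one_mul, mul_one]
    _ = Φ t s * (Φ s t * Q t * (Φ s t)ᵀ) * (Φ t s)ᵀ := by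
        rw [transpose_mul]
        noncomm_ring
    _ = Φ t s * Q s * (Φ t s)ᵀ := by rw [h]

noncomputable def bridgeMean (Φ : ℝ → ℝ → Matrix ι ι ℝ) (P : ℝ → Matrix ι ι ℝ)
    (ξ₀ ξ₁ : ι → ℝ) (t : ℝ) : ι → ℝ :=
  Φ t 0 *ᵥ ξ₀ + (P t * (Φ 1 t)ᵀ * (P 1)⁻¹) *ᵥ (ξ₁ - Φ 1 0 *ᵥ ξ₀)

theorem hasDerivAt_bridgeMean
    (hΦ : ∀ s t, HasDerivAt (fun t => Φ t s) (A t * Φ t s) t)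
    (hco : ∀ s t r, Φ s t * Φ t r = Φ s r) (hid : ∀ t, Φ t t = 1) {B P : ℝ → Matrix ι ι ℝ}
    (hP : ∀ t, HasDerivAt P (A t * P t + P t * (A t)ᵀ + B t * (B t)ᵀ) t)
    (ξ₀ ξ₁ : ι → ℝ) (t : ℝ) :
    HasDerivAt (bridgeMean Φ P ξ₀ ξ₁) (A t *ᵥ bridgeMean Φ P ξ₀ ξ₁ t
      + (B t * (B t)ᵀ * (Φ 1 t)ᵀ * (P 1)⁻¹) *ᵥ (ξ₁ - Φ 1 0 *ᵥ ξ₀)) t := by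
  have hN : HasDerivAt (fun t => P t * (Φ 1 t)ᵀ * (P 1)⁻¹)
      (A t * (P t * (Φ 1 t)ᵀ * (P 1)⁻¹) + B t * (B t)ᵀ * (Φ 1 t)ᵀ * (P 1)⁻¹) t :=
    (((hP t).mul (hasDerivAt_transition_right hΦ hco hid 1 t).matrix_transpose).mul_const
      _).congr_deriv <| by
        simp only [transpose_neg, transpose_mul]
        noncomm_ring
  refine (((hΦ 0 t).mulVec_const ξ₀).add (hN.mulVec_const _)).congr_deriv ?_
  simp only [bridgeMean, mulVec_add, add_mulVec, mulVec_mulVec]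
  abel

theorem mulVec_gain_eq_sub_bridgeMean (hco : ∀ s t r, Φ s t * Φ t r = Φ s r)
    (hid : ∀ t, Φ t t = 1) {P Phat : ℝ → Matrix ι ι ℝ} (hP1 : IsUnit (P 1)) {t : ℝ}
    (hsum : Phat t + P t = Φ t 1 * P 1 * (Φ t 1)ᵀ) (ξ₀ ξ₁ : ι → ℝ) :
    (Phat t * (Φ 1 t)ᵀ * (P 1)⁻¹) *ᵥ (ξ₁ - Φ 1 0 *ᵥ ξ₀)
      = Φ t 1 *ᵥ ξ₁ - bridgeMean Φ P ξ₀ ξ₁ t := by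
  have hgain : Phat t * (Φ 1 t)ᵀ * (P 1)⁻¹ = Φ t 1 - P t * (Φ 1 t)ᵀ * (P 1)⁻¹ := by
    rw [eq_sub_iff_add_eq, ← add_mul, ← add_mul, hsum, mul_assoc _ (Φ t 1)ᵀ, ← transpose_mul,
      hco, hid, transpose_one, mul_one,
      mul_nonsing_inv_cancel_right _ _ ((isUnit_iff_isUnit_det _).1 hP1)]
  rw [hgain, sub_mulVec, mulVec_sub, mulVec_mulVec, hco, bridgeMean]
  abel

end Transition

theorem stmt_17_general (n : ℕ) (A B : ℝ → Matrix (Fin n) (Fin n) ℝ)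
    (Φ : ℝ → ℝ → Matrix (Fin n) (Fin n) ℝ)
    (P Phat : ℝ → Matrix (Fin n) (Fin n) ℝ)
    (hΦd : ∀ s : ℝ, ∀ t : ℝ, ∀ i j : Fin n,
      HasDerivAt (fun t => Φ t s i j) ((A t * Φ t s) i j) t)
    (hΦid : ∀ t : ℝ, Φ t t = 1)
    (hΦco : ∀ s t r : ℝ, Φ s t * Φ t r = Φ s r)
    (hP : ∀ t : ℝ, ∀ i j : Fin n,
      HasDerivAt (fun t => P t i j)
        ((A t * P t + P t * (A t)ᵀ + B t * (B t)ᵀ) i j) t)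
    (hP0 : P 0 = 0)
    (hPhat : ∀ t : ℝ, ∀ i j : Fin n,
      HasDerivAt (fun t => Phat t i j)
        ((A t * Phat t + Phat t * (A t)ᵀ - B t * (B t)ᵀ) i j) t)
    (hPhat1 : Phat 1 = 0)
    (hPhatu : ∀ t ∈ Set.Ico (0 : ℝ) 1, IsUnit (Phat t))
    (hP1 : IsUnit (P 1))
    (ξ₀ ξ₁ : Fin n → ℝ) :
    (∀ t ∈ Set.Ico (0 : ℝ) 1, ∀ i : Fin n,
      HasDerivAt
        (fun t => ((Φ t 0).mulVec ξ₀
          + (P t * (Φ 1 t)ᵀ * (P 1)⁻¹).mulVec (ξ₁ - (Φ 1 0).mulVec ξ₀)) i)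
        (((A t - B t * (B t)ᵀ * (Phat t)⁻¹).mulVec
            ((Φ t 0).mulVec ξ₀
              + (P t * (Φ 1 t)ᵀ * (P 1)⁻¹).mulVec (ξ₁ - (Φ 1 0).mulVec ξ₀))
          + (B t * (B t)ᵀ * (Phat t)⁻¹ * Φ t 1).mulVec ξ₁) i) t) ∧
    (Φ 0 0).mulVec ξ₀
      + (P 0 * (Φ 1 0)ᵀ * (P 1)⁻¹).mulVec (ξ₁ - (Φ 1 0).mulVec ξ₀) = ξ₀ ∧
    (Φ 1 0).mulVec ξ₀
      + (P 1 * (Φ 1 1)ᵀ * (P 1)⁻¹).mulVec (ξ₁ - (Φ 1 0).mulVec ξ₀) = ξ₁ := by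
  have hΦ s t := Matrix.hasDerivAt_iff.2 (hΦd s t)
  have hPd t := Matrix.hasDerivAt_iff.2 (hP t)
  have hsum t : Phat t + P t = Φ t 1 * P 1 * (Φ t 1)ᵀ := by
    refine (eq_transition_conj_of_lyapunov (Q := Phat + P) hΦ hΦco hΦid
      (fun t => ?_) 1 t).trans ?_
    · exact ((Matrix.hasDerivAt_iff.2 (hPhat t)).add (hPd t)).congr_deriv <| by
        simp only [Pi.add_apply]
        noncomm_ring
    · rw [Pi.add_apply, hPhat1, zero_add]
  have hP1det := (isUnit_iff_isUnit_det _).1 hP1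
  refine ⟨fun t ht i => hasDerivAt_pi.1 ?_ i, by simp [hΦid, hP0], ?_⟩
  · have hPhatdet := (isUnit_iff_isUnit_det _).1 (hPhatu t ht)
    refine (hasDerivAt_bridgeMean hΦ hΦco hΦid hPd ξ₀ ξ₁ t).congr_deriv ?_
    change _ = (A t - B t * (B t)ᵀ * (Phat t)⁻¹) *ᵥ bridgeMean Φ P ξ₀ ξ₁ t + _
    have hBB : B t * (B t)ᵀ * (Φ 1 t)ᵀ * (P 1)⁻¹
        = B t * (B t)ᵀ * (Phat t)⁻¹ * (Phat t * (Φ 1 t)ᵀ * (P 1)⁻¹) := by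
      simp only [mul_assoc, nonsing_inv_mul_cancel_left _ _ hPhatdet]
    rw [hBB, ← mulVec_mulVec, mulVec_gain_eq_sub_bridgeMean hΦco hΦid hP1 (hsum t),
      mulVec_sub, sub_mulVec, mulVec_mulVec]
    abel
  · rw [hΦid, transpose_one, mul_one, mul_nonsing_inv _ hP1det, one_mulVec]
    abel

/-- First-moment identity of Proposition 2: the conditional mean
`L(t) = Φ(t,0)ξ₀ + P(t)Φ(1,t)ᵀ P(1)⁻¹ (ξ₁ − Φ(1,0)ξ₀)` of the bridge with arbitrary
boundary points satisfies `L̇ = Â(t)L + B(t)B(t)ᵀP̂(t)⁻¹Φ(t,1)ξ₁` on `[0,1)`,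
where `Â = A − BBᵀP̂⁻¹`, with `L(0) = ξ₀` and `L(1) = ξ₁`. -/
theorem stmt_17 (n : ℕ) (A B : ℝ → Matrix (Fin n) (Fin n) ℝ)
    (Φ : ℝ → ℝ → Matrix (Fin n) (Fin n) ℝ)
    (P Phat : ℝ → Matrix (Fin n) (Fin n) ℝ)
    (hA : Continuous A) (hB : Continuous B)
    (hΦd : ∀ s : ℝ, ∀ t : ℝ, ∀ i j : Fin n,
      HasDerivAt (fun t => Φ t s i j) ((A t * Φ t s) i j) t)
    (hΦid : ∀ t : ℝ, Φ t t = 1)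
    (hΦco : ∀ s t r : ℝ, Φ s t * Φ t r = Φ s r)
    (hΦinv : ∀ s t : ℝ, (Φ s t)⁻¹ = Φ t s)
    (hP : ∀ t : ℝ, ∀ i j : Fin n,
      HasDerivAt (fun t => P t i j)
        ((A t * P t + P t * (A t)ᵀ + B t * (B t)ᵀ) i j) t)
    (hP0 : P 0 = 0)
    (hPhat : ∀ t : ℝ, ∀ i j : Fin n,
      HasDerivAt (fun t => Phat t i j)
        ((A t * Phat t + Phat t * (A t)ᵀ - B t * (B t)ᵀ) i j) t)
    (hPhat1 : Phat 1 = 0)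
    (hPhatu : ∀ t ∈ Set.Ico (0 : ℝ) 1, IsUnit (Phat t))
    (hP1 : IsUnit (P 1))
    (ξ₀ ξ₁ : Fin n → ℝ) :
    (∀ t ∈ Set.Ico (0 : ℝ) 1, ∀ i : Fin n,
      HasDerivAt
        (fun t => ((Φ t 0).mulVec ξ₀
          + (P t * (Φ 1 t)ᵀ * (P 1)⁻¹).mulVec (ξ₁ - (Φ 1 0).mulVec ξ₀)) i)
        (((A t - B t * (B t)ᵀ * (Phat t)⁻¹).mulVec
            ((Φ t 0).mulVec ξ₀
              + (P t * (Φ 1 t)ᵀ * (P 1)⁻¹).mulVec (ξ₁ - (Φ 1 0).mulVec ξ₀))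
          + (B t * (B t)ᵀ * (Phat t)⁻¹ * Φ t 1).mulVec ξ₁) i) t) ∧
    (Φ 0 0).mulVec ξ₀
      + (P 0 * (Φ 1 0)ᵀ * (P 1)⁻¹).mulVec (ξ₁ - (Φ 1 0).mulVec ξ₀) = ξ₀ ∧
    (Φ 1 0).mulVec ξ₀
      + (P 1 * (Φ 1 1)ᵀ * (P 1)⁻¹).mulVec (ξ₁ - (Φ 1 0).mulVec ξ₀) = ξ₁ :=
  stmt_17_general n A B Φ P Phat hΦd hΦid hΦco hP hP0 hPhat hPhat1 hPhatu hP1 ξ₀ ξ₁
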